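/- Let k be a field and let (V, W, N) be a finite-dimensional filtered k-vector space with nilpotent endomorphism as in the context, satisfying the monodromy–weight condition centered at j. Then for every integer m < j, the induced map N : gr^W_{m+2} → gr^W_m is surjective; consequently, for every m < j one has W_m ⊆ W_{m−1} + N(V), i.e. the filtration induced by W on the cokernel V/N(V) has gr_m(V/N(V)) = 0 for all m < j. (This is the linear-algebra content of the assertion that the monodromy–weight conjecture implies that the inertia coinvariants of H^j have weights ≥ j, used to show the obstruction group vanishes for i = 2n and to derive the bound i ≤ 2n−1.) -/
import Mathlib


/-- `(V, W, N)` satisfies the monodromy–weight condition centered at `j`: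
for every `r ≥ 0` the map induced by `N^r` on graded pieces
`gr^W_{j+r} → gr^W_{j-r}` is an isomorphism, expressed elementarily as
injectivity and surjectivity of the induced map. -/
def MWCondition {k : Type*} [Field k] {V : Type*} [AddCommGroup V] [Module k V]
    (W : ℤ → Submodule k V) (N : V →ₗ[k] V) (j : ℤ) : Prop :=
  ∀ r : ℕ,
    (∀ x ∈ W (j + r), (N ^ r) x ∈ W (j - r - 1) → x ∈ W (j + r - 1)) ∧
    (∀ y ∈ W (j - r), ∃ x ∈ W (j + r), y - (N ^ r) x ∈ W (j - r - 1))

/-- If `(V, W, N)` satisfies the monodromy–weight condition centered at `j`, then for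
every `m < j` the induced map `N : gr^W_{m+2} → gr^W_m` is surjective (every
`y ∈ W_m` is congruent mod `W_{m-1}` to `N x` for some `x ∈ W_{m+2}`); consequently
`W_m ⊆ W_{m-1} + N(V)` for all `m < j`, i.e. the induced filtration on the cokernel
`V/N(V)` has vanishing graded pieces in degrees `< j` (the coinvariants have
weights `≥ j`). -/
theorem mw_condition_coinvariants_weights
    {k : Type*} [Field k] {V : Type*} [AddCommGroup V] [Module k V]
    [FiniteDimensional k V]
    (W : ℤ → Submodule k V) (N : V →ₗ[k] V)
    (hWmono : Monotone W)
    (hWexh : ∃ M : ℤ, ∀ m ≥ M, W m = ⊤)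
    (hWsep : ∃ M : ℤ, ∀ m ≤ M, W m = ⊥)
    (hNnil : IsNilpotent N)
    (hNW : ∀ m : ℤ, ∀ x ∈ W m, N x ∈ W (m - 2))
    (j : ℤ) (h : MWCondition W N j) :
    ∀ m : ℤ, m < j →
      (∀ y ∈ W m, ∃ x ∈ W (m + 2), y - N x ∈ W (m - 1)) ∧
      W m ≤ W (m - 1) ⊔ LinearMap.range N := by
  -- N^s maps W_m into W_{m - 2s}
  have hpow : ∀ s : ℕ, ∀ m : ℤ, ∀ x ∈ W m, (N ^ s) x ∈ W (m - 2 * s) := by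
    intro s
    induction s with
    | zero => intro m x hx; simpa using hx
    | succ s ih =>
      intro m x hx
      have h1 : (N ^ s) x ∈ W (m - 2 * s) := ih m x hx
      have h2 := hNW _ _ h1
      have heq : (N ^ (s + 1)) x = N ((N ^ s) x) := by
        rw [pow_succ']; rfl
      rw [heq]
      have : (m - 2 * (s : ℤ) - 2) = m - 2 * ((s : ℤ) + 1) := by ring
      rw [this] at h2
      simpa using h2
  intro m hm
  set r : ℕ := (j - m).toNat with hr
  have hrz : (r : ℤ) = j - m := Int.toNat_of_nonneg (by omega)
  have hr1 : 1 ≤ r := by omega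
  have key : ∀ y ∈ W m, ∃ x ∈ W (m + 2), y - N x ∈ W (m - 1) := by
    intro y hy
    obtain ⟨-, hsurj⟩ := h r
    have hy' : y ∈ W (j - r) := by rw [show j - (r : ℤ) = m by omega]; exact hy
    obtain ⟨x, hx, hyx⟩ := hsurj y hy'
    refine ⟨(N ^ (r - 1)) x, ?_, ?_⟩
    · have := hpow (r - 1) (j + r) x hx
      have hc : ((r - 1 : ℕ) : ℤ) = (r : ℤ) - 1 := by omega
      rw [show (j + (r : ℤ) - 2 * ((r - 1 : ℕ) : ℤ)) = m + 2 by rw [hc]; omega] at this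
      exact this
    · have heq : N ((N ^ (r - 1)) x) = (N ^ r) x := by
        have : N ^ r = N * N ^ (r - 1) := by
          rw [← pow_succ']; congr 1; omega
        rw [this]; rfl
      rw [heq]
      rw [show m - 1 = j - (r : ℤ) - 1 by omega]
      exact hyx
  refine ⟨key, ?_⟩
  intro y hy
  obtain ⟨x, _, hdiff⟩ := key y hy
  have hrange : N x ∈ LinearMap.range N := LinearMap.mem_range_self N x
  have : y = (y - N x) + N x := by abel
  rw [this]
  exact Submodule.add_mem_sup hdiff hrange
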